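/- Fix Δ > 0 and σ > 0. The function ε ↦ Φ(Δ/(2σ) − εσ/Δ) − e^ε·Φ(−Δ/(2σ) − εσ/Δ) is (weakly) monotone decreasing on [0, ∞). -/

import Mathlib

/-!
The ε-derivative of `Φ(a - cε) - e^ε Φ(-a - cε)` consists of three terms. Since
`(a + cε)² - (a - cε)² = 4acε = 2ε` for `ac = 1/2`, the Gaussian density satisfies
`e^ε φ(-a - cε) = φ(a - cε)`, so the two density terms cancel and the derivative is
`-e^ε Φ(-a - cε) ≤ 0`. With `a = Δ/(2σ)` and `c = σ/Δ` the function is antitone on all of `ℝ`.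
-/

open MeasureTheory Real Set Filter

/-- The standard normal CDF. -/
noncomputable def stdΦ (x : ℝ) : ℝ :=
  (Real.sqrt (2 * Real.pi))⁻¹ * ∫ t in Set.Iic x, Real.exp (-t ^ 2 / 2)

theorem hasDerivAt_integral_Iic {f : ℝ → ℝ} {x : ℝ} (hf : Integrable f) (hfx : ContinuousAt f x) :
    HasDerivAt (fun y => ∫ t in Iic y, f t) (f x) x := by
  have hsplit : (fun y => ∫ t in Iic y, f t) =
      fun y => (∫ t in Iic 0, f t) + ∫ t in (0 : ℝ)..y, f t := by
    funext y
    rw [← intervalIntegral.integral_Iic_sub_Iic hf.integrableOn hf.integrableOn]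
    ring
  rw [hsplit]
  exact (intervalIntegral.integral_hasDerivAt_right hf.intervalIntegrable
    hf.aestronglyMeasurable.stronglyMeasurableAtFilter hfx).const_add _

theorem integrable_exp_neg_sq_div_two : Integrable fun t : ℝ => exp (-t ^ 2 / 2) := by
  convert integrable_exp_neg_mul_sq (b := 1 / 2) (by norm_num) using 2 with t
  ring_nf

theorem stdΦ_nonneg (x : ℝ) : 0 ≤ stdΦ x :=
  mul_nonneg (inv_nonneg.2 (sqrt_nonneg _)) (integral_nonneg fun _ => (exp_pos _).le)

theorem hasDerivAt_stdΦ (x : ℝ) :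
    HasDerivAt stdΦ ((√(2 * π))⁻¹ * exp (-x ^ 2 / 2)) x :=
  (hasDerivAt_integral_Iic integrable_exp_neg_sq_div_two (by fun_prop)).const_mul _

theorem exp_mul_exp_neg_sq_div_two {a c : ℝ} (hac : a * c = 1 / 2) (ε : ℝ) :
    exp ε * exp (-(-a - ε * c) ^ 2 / 2) = exp (-(a - ε * c) ^ 2 / 2) := by
  rw [← exp_add]
  congr 1
  linear_combination (-2 * ε) * hac

theorem hasDerivAt_stdΦ_sub_exp_mul_stdΦ {a c : ℝ} (hac : a * c = 1 / 2) (ε : ℝ) :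
    HasDerivAt (fun ε => stdΦ (a - ε * c) - exp ε * stdΦ (-a - ε * c))
      (-(exp ε * stdΦ (-a - ε * c))) ε := by
  have hlin : ∀ b : ℝ, HasDerivAt (fun ε => b - ε * c) (-c) ε := fun b => by
    simpa using ((hasDerivAt_id ε).mul_const c).const_sub b
  refine (((hasDerivAt_stdΦ _).comp ε (hlin a)).sub
    ((hasDerivAt_exp ε).mul ((hasDerivAt_stdΦ _).comp ε (hlin (-a))))).congr_deriv ?_
  rw [← exp_mul_exp_neg_sq_div_two hac ε, Function.comp_apply]
  ring

theorem antitone_stdΦ_sub_exp_mul_stdΦ {a c : ℝ} (hac : a * c = 1 / 2) :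
    Antitone fun ε => stdΦ (a - ε * c) - exp ε * stdΦ (-a - ε * c) :=
  antitone_of_hasDerivAt_nonpos (hasDerivAt_stdΦ_sub_exp_mul_stdΦ hac) fun ε =>
    neg_nonpos.2 (mul_nonneg (exp_pos ε).le (stdΦ_nonneg _))

theorem stmt3 (Δ σ : ℝ) (hΔ : 0 < Δ) (hσ : 0 < σ) :
    AntitoneOn (fun ε : ℝ =>
      stdΦ (Δ / (2 * σ) - ε * σ / Δ) - Real.exp ε * stdΦ (-(Δ / (2 * σ)) - ε * σ / Δ))
      (Set.Ici 0) := by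
  have hac : Δ / (2 * σ) * (σ / Δ) = 1 / 2 := by
    field_simp
  simp_rw [mul_div_assoc]
  exact (antitone_stdΦ_sub_exp_mul_stdΦ hac).antitoneOn _
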